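/- arXiv:1403.4583 — 2 statements merged into one kernel-verified Lean document; each statement's English description precedes it below -/
import Mathlib

section
/- Let 0 ≤ δ₂ ≤ δ₁ ≤ 1/2 and t ∈ [0,1/2]. Then h_b(δ₁) - h_b(δ₂) ≥ h_b(δ₁ * t) - h_b(δ₂ * t) ≥ 0, where a * t = a(1-t)+(1-a)t. Moreover, if δ₂ < δ₁ and 0 < t ≤ 1/2 then the first inequality is strict. -/
/-- Binary entropy (base 2). -/
noncomputable def hb (p : ℝ) : ℝ := -(p * Real.logb 2 p) - (1 - p) * Real.logb 2 (1 - p)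

/-- Binary convolution: `a * t := a(1-t) + (1-a)t`. -/
noncomputable def binConv (a t : ℝ) : ℝ := a * (1 - t) + (1 - a) * t

/-!
Work with the natural-log entropy `H = binEntropy`, of which `hb` is a positive multiple.
For `0 < t ≤ 1/2` the map `a ↦ H(a) - H(a ⋆ t)` is strictly increasing on `[0, 1/2]`: its
derivative `H'(a) - (1 - 2t) H'(a ⋆ t)` is positive, because `H'(a) = log (1 - a) - log a` is
positive on `(0, 1/2)` and antitone, `a ≤ a ⋆ t`, and `0 ≤ 1 - 2t < 1`. The lower bound is
monotonicity of `H` on `[0, 1/2]`, since `a ↦ a ⋆ t` maps `[0, 1/2]` monotonically into itself.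
-/

open Real Set

lemma hb_eq_binEntropy_div_log_two (p : ℝ) : hb p = binEntropy p / log 2 := by
  simp only [hb, binEntropy, logb, log_inv]
  ring

section binConv

variable {a b t : ℝ}

lemma binConv_eq_add_mul (a t : ℝ) : binConv a t = t + (1 - 2 * t) * a := by
  unfold binConv; ring

@[simp]
lemma binConv_zero_right (a : ℝ) : binConv a 0 = a := by
  simp [binConv]

lemma hasDerivAt_binConv (a t : ℝ) : HasDerivAt (binConv · t) (1 - 2 * t) a := by
  simp_rw [binConv_eq_add_mul]
  simpa using ((hasDerivAt_id a).const_mul (1 - 2 * t)).const_add t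

lemma binConv_le_binConv_left (ht : t ≤ 1 / 2) (hab : a ≤ b) : binConv a t ≤ binConv b t := by
  rw [binConv_eq_add_mul, binConv_eq_add_mul]; nlinarith

lemma binConv_le_half (ha : a ≤ 1 / 2) (ht : t ≤ 1 / 2) : binConv a t ≤ 1 / 2 := by
  rw [binConv_eq_add_mul]; nlinarith

lemma lt_binConv (ha : a < 1 / 2) (ht : 0 < t) : a < binConv a t := by
  rw [binConv_eq_add_mul]; nlinarith

lemma binConv_nonneg (ha₀ : 0 ≤ a) (ha₁ : a ≤ 1) (ht₀ : 0 ≤ t) (ht₁ : t ≤ 1) :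
    0 ≤ binConv a t :=
  add_nonneg (mul_nonneg ha₀ (sub_nonneg.2 ht₁)) (mul_nonneg (sub_nonneg.2 ha₁) ht₀)

end binConv

lemma log_one_sub_sub_log_pos {a : ℝ} (ha₀ : 0 < a) (ha : a < 1 / 2) :
    0 < log (1 - a) - log a :=
  sub_pos.2 (log_lt_log ha₀ (by linarith))

lemma log_one_sub_sub_log_antitoneOn :
    AntitoneOn (fun a => log (1 - a) - log a) (Ioo 0 1) := by
  intro a ha b hb hab
  have h₁ : log (1 - b) ≤ log (1 - a) := log_le_log (by linarith [hb.2]) (by linarith)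
  have h₂ : log a ≤ log b := log_le_log ha.1 hab
  dsimp only
  linarith

theorem strictMonoOn_binEntropy_sub_binEntropy_binConv {t : ℝ} (ht₀ : 0 < t) (ht : t ≤ 1 / 2) :
    StrictMonoOn (fun a => binEntropy a - binEntropy (binConv a t)) (Icc 0 (1 / 2)) := by
  apply strictMonoOn_of_deriv_pos (convex_Icc _ _)
  · exact (binEntropy_continuous.sub
      (binEntropy_continuous.comp (continuous_iff_continuousAt.2
        fun a => (hasDerivAt_binConv a t).continuousAt))).continuousOn
  intro a ha
  rw [interior_Icc] at ha
  obtain ⟨ha₀, ha⟩ := ha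
  set b := binConv a t
  have hab : a ≤ b := (lt_binConv ha ht₀).le
  have hb₀ : 0 < b := ha₀.trans_le hab
  have hb : b < 1 := by linarith [binConv_le_half ha.le ht]
  have hderiv : HasDerivAt (fun a => binEntropy a - binEntropy (binConv a t))
      (log (1 - a) - log a - (log (1 - b) - log b) * (1 - 2 * t)) a :=
    (hasDerivAt_binEntropy ha₀.ne' (by linarith)).sub
      (HasDerivAt.comp a (hasDerivAt_binEntropy hb₀.ne' hb.ne) (hasDerivAt_binConv a t))
  rw [hderiv.deriv, sub_pos]
  have hanti := log_one_sub_sub_log_antitoneOn ⟨ha₀, by linarith⟩ ⟨hb₀, hb⟩ hab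
  calc (log (1 - b) - log b) * (1 - 2 * t)
      ≤ (log (1 - a) - log a) * (1 - 2 * t) := by gcongr; linarith
    _ < log (1 - a) - log a :=
      mul_lt_of_lt_one_right (log_one_sub_sub_log_pos ha₀ ha) (by linarith)

/-- For `0 ≤ δ₂ ≤ δ₁ ≤ 1/2` and `t ∈ [0,1/2]`:
`h_b(δ₁) - h_b(δ₂) ≥ h_b(δ₁*t) - h_b(δ₂*t) ≥ 0`, with the first inequality
strict when `δ₂ < δ₁` and `0 < t`. -/
theorem entropy_gap_shrinks (δ₁ δ₂ t : ℝ) (h0 : 0 ≤ δ₂) (h21 : δ₂ ≤ δ₁)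
    (h1 : δ₁ ≤ 1/2) (ht : t ∈ Set.Icc (0:ℝ) (1/2)) :
    (hb (binConv δ₁ t) - hb (binConv δ₂ t) ≤ hb δ₁ - hb δ₂) ∧
    (0 ≤ hb (binConv δ₁ t) - hb (binConv δ₂ t)) ∧
    (δ₂ < δ₁ → 0 < t → hb (binConv δ₁ t) - hb (binConv δ₂ t) < hb δ₁ - hb δ₂) := by
  obtain ⟨ht₀, ht⟩ := ht
  have hδ₁ : δ₁ ∈ Icc (0 : ℝ) (1 / 2) := ⟨h0.trans h21, h1⟩
  have hδ₂ : δ₂ ∈ Icc (0 : ℝ) (1 / 2) := ⟨h0, h21.trans h1⟩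
  have hlog2 : 0 < log 2 := log_pos one_lt_two
  simp only [hb_eq_binEntropy_div_log_two, div_sub_div_same, div_le_div_iff_of_pos_right hlog2,
    div_lt_div_iff_of_pos_right hlog2]
  have strict (hlt : δ₂ < δ₁) (htpos : 0 < t) :
      binEntropy (binConv δ₁ t) - binEntropy (binConv δ₂ t) < binEntropy δ₁ - binEntropy δ₂ := by
    have := strictMonoOn_binEntropy_sub_binEntropy_binConv htpos ht hδ₂ hδ₁ hlt
    dsimp only at this
    linarith
  refine ⟨?_, div_nonneg (sub_nonneg.2 ?_) hlog2.le, strict⟩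
  · rcases h21.eq_or_lt with rfl | hlt
    · simp
    rcases ht₀.eq_or_lt with rfl | ht₀
    · simp
    exact (strict hlt ht₀).le
  · have hmem (δ : ℝ) (hδ : δ ∈ Icc (0 : ℝ) (1 / 2)) : binConv δ t ∈ Icc (0 : ℝ) 2⁻¹ :=
      ⟨binConv_nonneg hδ.1 (by linarith [hδ.2]) ht₀ (by linarith),
        by simpa using binConv_le_half hδ.2 ht⟩
    exact binEntropy_strictMonoOn.monotoneOn (hmem δ₂ hδ₂) (hmem δ₁ hδ₁)
      (binConv_le_binConv_left ht h21)
end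

section
/- For every δ ∈ [0, 3/4], the inequality h_b(δ) + δ·log₂ 3 ≤ 2·h_b(2δ/3) holds, with equality at δ = 0 and δ = 3/4. -/
/-- Termwise Gibbs inequality: `-a log a ≤ -a log b + (b - a)` for `a, b > 0`. -/
lemma gibbs_term (a b : ℝ) (ha : 0 < a) (hb' : 0 < b) :
    -(a * Real.log a) ≤ -(a * Real.log b) + (b - a) := by
  have h := Real.log_le_sub_one_of_pos (div_pos hb' ha)
  rw [Real.log_div hb'.ne' ha.ne'] at h
  have h2 := mul_le_mul_of_nonneg_left h ha.le
  have h3 : a * (b / a - 1) = b - a := by field_simp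
  nlinarith [h2, h3]

/-- For `δ ∈ [0,3/4]`, `h_b(δ) + δ log₂3 ≤ 2 h_b(2δ/3)`, with equality at `0` and `3/4`. -/
theorem quaternary_entropy_ineq :
    (∀ δ ∈ Set.Icc (0:ℝ) (3/4), hb δ + δ * Real.logb 2 3 ≤ 2 * hb (2 * δ / 3)) ∧
    (hb 0 + (0:ℝ) * Real.logb 2 3 = 2 * hb (2 * 0 / 3)) ∧
    (hb (3/4) + (3/4 : ℝ) * Real.logb 2 3 = 2 * hb (2 * (3/4) / 3)) := by
  have hlog2 : (0:ℝ) < Real.log 2 := Real.log_pos one_lt_two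
  have heq0 : hb 0 + (0:ℝ) * Real.logb 2 3 = 2 * hb (2 * 0 / 3) := by
    simp [hb]
  have heq34 : hb (3/4) + (3/4 : ℝ) * Real.logb 2 3 = 2 * hb (2 * (3/4) / 3) := by
    have h12 : Real.logb 2 (1/2 : ℝ) = -1 := by
      rw [one_div, Real.logb_inv, Real.logb_self_eq_one] <;> norm_num
      
    have h4 : Real.logb 2 (4 : ℝ) = 2 := by
      simp [Real.logb, show (4:ℝ) = 2^(2:ℕ) by norm_num, Real.log_pow]
      field_simp
    have h34 : Real.logb 2 (3/4 : ℝ) = Real.logb 2 3 - 2 := by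
      rw [Real.logb_div (by norm_num) (by norm_num), h4]
    have h14 : Real.logb 2 (1/4 : ℝ) = -2 := by
      rw [Real.logb_div (by norm_num) (by norm_num), h4, Real.logb_one]; ring
    have e1 : (1:ℝ) - 3/4 = 1/4 := by norm_num
    have e2 : (2:ℝ) * (3/4) / 3 = 1/2 := by norm_num
    have e3 : (1:ℝ) - 1/2 = 1/2 := by norm_num
    rw [hb, hb, e1, e2, e3, h12, h34, h14]
    ring
  refine ⟨?_, heq0, heq34⟩
  rintro δ ⟨h0, h1⟩
  rcases eq_or_lt_of_le h0 with rfl | hpos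
  · linarith [heq0.le]
  have hd1 : δ < 1 := by linarith
  have h1d : 0 < 1 - δ := by linarith
  have hq : 0 < 2 * δ / 3 := by linarith
  have hq1 : 0 < 1 - 2 * δ / 3 := by linarith
  -- Gibbs terms: p = (1-δ, δ/3, δ/3, δ/3), r = ((1-q)², q(1-q), q(1-q), q²)
  have G0 := gibbs_term (1 - δ) ((1 - 2*δ/3)^2) h1d (by positivity)
  have G1 := gibbs_term (δ/3) ((2*δ/3) * (1 - 2*δ/3)) (by linarith) (by positivity)
  have G3 := gibbs_term (δ/3) ((2*δ/3)^2) (by linarith) (by positivity)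
  have e0 : Real.log ((1 - 2*δ/3)^2) = 2 * Real.log (1 - 2*δ/3) := by
    rw [Real.log_pow]; norm_num
  have e1 : Real.log ((2*δ/3) * (1 - 2*δ/3)) = Real.log (2*δ/3) + Real.log (1 - 2*δ/3) :=
    Real.log_mul hq.ne' hq1.ne'
  have e2 : Real.log ((2*δ/3)^2) = 2 * Real.log (2*δ/3) := by
    rw [Real.log_pow]; norm_num
  have e3 : Real.log (δ/3) = Real.log δ - Real.log 3 :=
    Real.log_div hpos.ne' (by norm_num)
  rw [e0] at G0
  rw [e1, e3] at G1
  rw [e2, e3] at G3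
  have key : -(δ * Real.log δ) - (1 - δ) * Real.log (1 - δ) + δ * Real.log 3 ≤
      2 * (-(2*δ/3 * Real.log (2*δ/3)) - (1 - 2*δ/3) * Real.log (1 - 2*δ/3)) := by
    nlinarith [G0, G1, G3]
  have expandL : hb δ + δ * Real.logb 2 3 =
      (-(δ * Real.log δ) - (1 - δ) * Real.log (1 - δ) + δ * Real.log 3) / Real.log 2 := by
    simp only [hb, Real.logb]; ring
  have expandR : 2 * hb (2 * δ / 3) =
      (2 * (-(2*δ/3 * Real.log (2*δ/3)) - (1 - 2*δ/3) * Real.log (1 - 2*δ/3))) / Real.log 2 := by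
    simp only [hb, Real.logb]; ring
  rw [expandL, expandR]
  gcongr
end
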